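/- lim_{λ,μ→0+} λμ ∫₀^∞ ∫₀^∞ |x - y| I₀(2√(xy)) e^{-x-y} e^{-ω(λx + μy)} dy dx = 0 for every fixed ω > 0. -/

import Mathlib

open MeasureTheory Real Filter

/-- The modified Bessel function of the first kind of order zero. -/
noncomputable def besselI0 (z : ℝ) : ℝ :=
  ∑' k : ℕ, (z / 2) ^ (2 * k) / ((Nat.factorial k : ℝ)) ^ 2

/-!
On `(0, ∞)²` we have `I₀(2√(xy)) = ∑ₖ (xy)ᵏ / (k!)²`. With `α = 1 + ωλ`, `β = 1 + ωμ` and any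
`t > 0`, bound `|x - y| ≤ t (x - y)² + 1 / (4t)`; then every term of the resulting series is a
product of Gamma integrals, and the `k`-th one is at most
`(1 / (4t) + 2t (k + 1) + t δ² (k + 1) (k + 2)) qᵏ`, where `q = 1 / (αβ)` and `δ = 1 - q`. The
factor `δ²` comes from `(1/α - 1/β)² ≤ (1 - q)²`: this is where the cancellation in `|x - y|` is
used. Summing gives `1 / (4tδ) + 4t / δ²`, and since `δ ≳ λ + μ` and `λμ ≤ (λ + μ)² / 4`, the choice
`t = √(λ + μ)` bounds `λμ` times the integral by a multiple of `√(λ + μ)`.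
-/

open Set
open scoped Nat

section Moments

variable {γ : ℝ}

lemma integral_pow_mul_exp_neg_mul (hγ : 0 < γ) (n : ℕ) :
    ∫ x in Ioi 0, x ^ n * exp (-(γ * x)) = n ! / γ ^ (n + 1) := by
  have h := integral_rpow_mul_exp_neg_mul_Ioi (a := n + 1) (by positivity) hγ
  rw [add_sub_cancel_right, Gamma_nat_eq_factorial, ← Nat.cast_succ, rpow_natCast] at h
  simp_rw [rpow_natCast] at h
  rw [h, one_div_pow, one_div_mul_eq_div]

lemma integrableOn_pow_mul_exp_neg_mul (hγ : 0 < γ) (n : ℕ) :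
    IntegrableOn (fun x => x ^ n * exp (-(γ * x))) (Ioi 0) :=
  Integrable.of_integral_ne_zero <| by rw [integral_pow_mul_exp_neg_mul hγ]; positivity

lemma integral_quadratic_mul_pow_mul_exp_neg_mul (hγ : 0 < γ) (k : ℕ) (a b c : ℝ) :
    ∫ x in Ioi 0, (a + b * x + c * x ^ 2) * (x ^ k * exp (-(γ * x))) =
      a * (k ! / γ ^ (k + 1)) + b * ((k + 1)! / γ ^ (k + 2)) + c * ((k + 2)! / γ ^ (k + 3)) := by
  have hi : ∀ (n : ℕ) (d : ℝ), IntegrableOn (fun x => d * (x ^ n * exp (-(γ * x)))) (Ioi 0) :=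
    fun n d => (integrableOn_pow_mul_exp_neg_mul hγ n).const_mul d
  have hab : IntegrableOn (fun x => a * (x ^ k * exp (-(γ * x))) +
      b * (x ^ (k + 1) * exp (-(γ * x)))) (Ioi 0) := (hi k a).add (hi (k + 1) b)
  simp_rw [show ∀ x : ℝ, (a + b * x + c * x ^ 2) * (x ^ k * exp (-(γ * x))) =
      a * (x ^ k * exp (-(γ * x))) + b * (x ^ (k + 1) * exp (-(γ * x))) +
        c * (x ^ (k + 2) * exp (-(γ * x))) from fun x => by ring]
  rw [integral_add hab (hi (k + 2) c), integral_add (hi k a) (hi (k + 1) b), integral_const_mul,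
    integral_const_mul, integral_const_mul, integral_pow_mul_exp_neg_mul hγ,
    integral_pow_mul_exp_neg_mul hγ, integral_pow_mul_exp_neg_mul hγ]

lemma integrableOn_quadratic_mul_pow_mul_exp_neg_mul (hγ : 0 < γ) (k : ℕ) (a b c : ℝ) :
    IntegrableOn (fun x => (a + b * x + c * x ^ 2) * (x ^ k * exp (-(γ * x)))) (Ioi 0) := by
  have hi : ∀ (n : ℕ) (d : ℝ), IntegrableOn (fun x => d * (x ^ n * exp (-(γ * x)))) (Ioi 0) :=
    fun n d => (integrableOn_pow_mul_exp_neg_mul hγ n).const_mul d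
  refine IntegrableOn.congr_fun (((hi k a).add (hi (k + 1) b)).add (hi (k + 2) c))
    (fun x _ => ?_) measurableSet_Ioi
  simp only [Pi.add_apply]; ring

end Moments

lemma besselI0_nonneg (z : ℝ) : 0 ≤ besselI0 z :=
  tsum_nonneg fun k => by rw [pow_mul]; positivity

lemma hasSum_besselI0_two_mul_sqrt {u : ℝ} (hu : 0 ≤ u) :
    HasSum (fun k : ℕ => u ^ k / (k ! : ℝ) ^ 2) (besselI0 (2 * √u)) := by
  have hsum : Summable fun k : ℕ => u ^ k / (k ! : ℝ) ^ 2 := by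
    refine (summable_pow_div_factorial u).of_nonneg_of_le (fun k => by positivity) fun k => ?_
    have : (k ! : ℝ) ≤ (k ! : ℝ) ^ 2 := le_self_pow₀ (by exact_mod_cast k.factorial_pos) two_ne_zero
    gcongr
  convert hsum.hasSum using 1
  refine tsum_congr fun k => ?_
  rw [mul_div_cancel_left₀ _ two_ne_zero, pow_mul, sq_sqrt hu]

lemma abs_le_mul_sq_add_inv {t : ℝ} (ht : 0 < t) (z : ℝ) : |z| ≤ t * z ^ 2 + 1 / (4 * t) := by
  have key : t * z ^ 2 + 1 / (4 * t) - |z| = (2 * t * |z| - 1) ^ 2 / (4 * t) := by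
    field_simp; rw [← sq_abs z]; ring
  nlinarith [key, div_nonneg (sq_nonneg (2 * t * |z| - 1)) (by positivity : (0 : ℝ) ≤ 4 * t)]

noncomputable def majorantTerm (α β t c : ℝ) (k : ℕ) (x y : ℝ) : ℝ :=
  (t * (x - y) ^ 2 + c) * ((x * y) ^ k / (k ! : ℝ) ^ 2) * (exp (-(α * x)) * exp (-(β * y)))

section MajorantTerm

variable {α β t c : ℝ} (k : ℕ)

lemma majorantTerm_nonneg (ht : 0 ≤ t) (hc : 0 ≤ c) {x y : ℝ} (hx : 0 ≤ x) (hy : 0 ≤ y) :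
    0 ≤ majorantTerm α β t c k x y := by
  unfold majorantTerm; positivity

lemma majorantTerm_eq (x y : ℝ) : majorantTerm α β t c k x y =
    x ^ k * exp (-(α * x)) / (k ! : ℝ) ^ 2 *
      ((t * x ^ 2 + c + -(2 * t * x) * y + t * y ^ 2) * (y ^ k * exp (-(β * y)))) := by
  unfold majorantTerm; ring

lemma integral_majorantTerm (hβ : 0 < β) (x : ℝ) :
    ∫ y in Ioi 0, majorantTerm α β t c k x y =
      x ^ k * exp (-(α * x)) / (k ! : ℝ) ^ 2 * ((t * x ^ 2 + c) * (k ! / β ^ (k + 1)) +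
        -(2 * t * x) * ((k + 1)! / β ^ (k + 2)) + t * ((k + 2)! / β ^ (k + 3))) := by
  simp_rw [majorantTerm_eq]
  rw [integral_const_mul, integral_quadratic_mul_pow_mul_exp_neg_mul hβ]

lemma integrableOn_majorantTerm (hβ : 0 < β) (x : ℝ) :
    IntegrableOn (fun y => majorantTerm α β t c k x y) (Ioi 0) := by
  simp_rw [majorantTerm_eq]
  exact (integrableOn_quadratic_mul_pow_mul_exp_neg_mul hβ k _ _ _).const_mul _

lemma lintegral_lintegral_majorantTerm (hα : 0 < α) (hβ : 0 < β) (ht : 0 ≤ t) (hc : 0 ≤ c) :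
    ∫⁻ x in Ioi 0, ∫⁻ y in Ioi 0, ENNReal.ofReal (majorantTerm α β t c k x y) =
      ENNReal.ofReal ((c + t * ((k + 1) * (k + 2) * (α⁻¹ ^ 2 + β⁻¹ ^ 2) -
        2 * (k + 1) ^ 2 * (α⁻¹ * β⁻¹))) * (α⁻¹ * β⁻¹) ^ (k + 1)) := by
  have hinner : ∀ x ∈ Ioi (0 : ℝ), ∫⁻ y in Ioi 0, ENNReal.ofReal (majorantTerm α β t c k x y) =
      ENNReal.ofReal (∫ y in Ioi 0, majorantTerm α β t c k x y) := fun x hx =>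
    (ofReal_integral_eq_lintegral_ofReal (integrableOn_majorantTerm k hβ x)
      (ae_restrict_of_forall_mem measurableSet_Ioi fun y hy =>
        majorantTerm_nonneg k ht hc (le_of_lt hx) (le_of_lt hy))).symm
  have hquad : ∀ x, ∫ y in Ioi 0, majorantTerm α β t c k x y =
      1 / (k ! : ℝ) ^ 2 * ((c * (k ! / β ^ (k + 1)) + t * ((k + 2)! / β ^ (k + 3)) +
        -(2 * t * ((k + 1)! / β ^ (k + 2))) * x + t * (k ! / β ^ (k + 1)) * x ^ 2) *
          (x ^ k * exp (-(α * x)))) := fun x => by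
    rw [integral_majorantTerm k hβ]; ring
  have hint : IntegrableOn (fun x => ∫ y in Ioi 0, majorantTerm α β t c k x y) (Ioi 0) := by
    simp_rw [hquad]
    exact (integrableOn_quadratic_mul_pow_mul_exp_neg_mul hα k _ _ _).const_mul _
  have hnonneg : ∀ x ∈ Ioi (0 : ℝ), 0 ≤ ∫ y in Ioi 0, majorantTerm α β t c k x y := fun x hx =>
    setIntegral_nonneg measurableSet_Ioi fun y hy =>
      majorantTerm_nonneg k ht hc (le_of_lt hx) (le_of_lt hy)
  rw [setLIntegral_congr_fun measurableSet_Ioi hinner,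
    ← ofReal_integral_eq_lintegral_ofReal hint
      (ae_restrict_of_forall_mem measurableSet_Ioi hnonneg)]
  congr 1
  simp_rw [hquad]
  rw [integral_const_mul, integral_quadratic_mul_pow_mul_exp_neg_mul hα]
  have hk : (k ! : ℝ) ≠ 0 := by positivity
  simp only [Nat.factorial_succ, Nat.cast_mul, Nat.cast_add, Nat.cast_one, mul_pow, inv_pow]
  field_simp
  ring

end MajorantTerm

lemma majorantCoeff_le {a b t c : ℝ} (ha0 : 0 ≤ a) (ha1 : a ≤ 1) (hb0 : 0 ≤ b) (hb1 : b ≤ 1)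
    (ht : 0 ≤ t) (hc : 0 ≤ c) (k : ℕ) :
    (c + t * ((k + 1) * (k + 2) * (a ^ 2 + b ^ 2) - 2 * (k + 1) ^ 2 * (a * b))) * (a * b) ^ (k + 1)
      ≤ (c + 2 * t * (k + 1) + t * (1 - a * b) ^ 2 * ((k + 1) * (k + 2))) * (a * b) ^ k := by
  have hsplit : (k + 1) * (k + 2) * (a ^ 2 + b ^ 2) - 2 * (k + 1) ^ 2 * (a * b) =
      (k + 1) ^ 2 * (a - b) ^ 2 + (k + 1) * (a ^ 2 + b ^ 2) := by ring
  -- `(1 - a b)² - (a - b)² = (1 - a²) (1 - b²)`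
  have hdiff : (a - b) ^ 2 ≤ (1 - a * b) ^ 2 := by
    nlinarith [mul_nonneg (sub_nonneg.2 (pow_le_one₀ ha0 ha1 : a ^ 2 ≤ 1))
      (sub_nonneg.2 (pow_le_one₀ hb0 hb1 : b ^ 2 ≤ 1))]
  have hk : (0 : ℝ) ≤ k := k.cast_nonneg
  have hcoef : c + t * ((k + 1) * (k + 2) * (a ^ 2 + b ^ 2) - 2 * (k + 1) ^ 2 * (a * b)) ≤
      c + 2 * t * (k + 1) + t * (1 - a * b) ^ 2 * ((k + 1) * (k + 2)) := by
    rw [hsplit]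
    have h1 : (k + 1) ^ 2 * (a - b) ^ 2 ≤ (1 - a * b) ^ 2 * ((k + 1) * (k + 2)) := by
      nlinarith [mul_le_mul hdiff (by nlinarith : ((k : ℝ) + 1) ^ 2 ≤ (k + 1) * (k + 2))
        (by positivity) (sq_nonneg _)]
    have h2 : (k + 1) * (a ^ 2 + b ^ 2) ≤ 2 * (k + 1) := by
      nlinarith [pow_le_one₀ ha0 ha1 (n := 2), pow_le_one₀ hb0 hb1 (n := 2)]
    nlinarith [mul_le_mul_of_nonneg_left (add_le_add h1 h2) ht]
  have hpow : (a * b) ^ (k + 1) ≤ (a * b) ^ k :=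
    pow_le_pow_of_le_one (by positivity) (mul_le_one₀ ha1 hb0 hb1) k.le_succ
  calc _ ≤ (c + 2 * t * (k + 1) + t * (1 - a * b) ^ 2 * ((k + 1) * (k + 2))) * (a * b) ^ (k + 1) :=
        mul_le_mul_of_nonneg_right hcoef (by positivity)
    _ ≤ _ := mul_le_mul_of_nonneg_left hpow (by positivity)

lemma hasSum_majorantBound {q : ℝ} (t c : ℝ) (hq0 : 0 ≤ q) (hq1 : q < 1) :
    HasSum (fun k : ℕ => (c + 2 * t * (k + 1) + t * (1 - q) ^ 2 * ((k + 1) * (k + 2))) * q ^ k)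
      (c / (1 - q) + 2 * t / (1 - q) ^ 2 + 2 * t / (1 - q)) := by
  have hq : ‖q‖ < 1 := by rwa [norm_of_nonneg hq0]
  have hδ : 1 - q ≠ 0 := by linarith
  have h := ((hasSum_choose_mul_geometric_of_norm_lt_one 0 hq).mul_left c).add
    (((hasSum_choose_mul_geometric_of_norm_lt_one 1 hq).mul_left (2 * t)).add
      ((hasSum_choose_mul_geometric_of_norm_lt_one 2 hq).mul_left (2 * t * (1 - q) ^ 2)))
  rw [show c / (1 - q) + 2 * t / (1 - q) ^ 2 + 2 * t / (1 - q) = c * (1 / (1 - q) ^ (0 + 1)) +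
      (2 * t * (1 / (1 - q) ^ (1 + 1)) + 2 * t * (1 - q) ^ 2 * (1 / (1 - q) ^ (2 + 1))) by
    field_simp; ring]
  refine h.congr_fun fun k => ?_
  simp only [Nat.choose_zero_right, Nat.choose_one_right, Nat.cast_choose_two, Nat.cast_one,
    Nat.cast_add, Nat.cast_ofNat]
  ring

lemma enorm_le_tsum_majorantTerm {α β t : ℝ} (ht : 0 < t) {x y : ℝ} (hx : 0 ≤ x) (hy : 0 ≤ y) :
    ‖|x - y| * besselI0 (2 * √(x * y)) * exp (-(α * x)) * exp (-(β * y))‖ₑ ≤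
      ∑' k, ENNReal.ofReal (majorantTerm α β t (1 / (4 * t)) k x y) := by
  have hsum : HasSum (fun k => majorantTerm α β t (1 / (4 * t)) k x y)
      ((t * (x - y) ^ 2 + 1 / (4 * t)) * besselI0 (2 * √(x * y)) *
        (exp (-(α * x)) * exp (-(β * y)))) :=
    ((hasSum_besselI0_two_mul_sqrt (mul_nonneg hx hy)).mul_left _).mul_right _
  have hI := besselI0_nonneg (2 * √(x * y))
  rw [← ENNReal.ofReal_tsum_of_nonneg
    (fun k => majorantTerm_nonneg k ht.le (by positivity) hx hy) hsum.summable, hsum.tsum_eq,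
    Real.enorm_eq_ofReal_abs]
  refine ENNReal.ofReal_le_ofReal ?_
  rw [abs_of_nonneg (by positivity), mul_assoc _ (exp _)]
  gcongr
  exact abs_le_mul_sq_add_inv ht _

lemma lintegral_lintegral_enorm_le {α β t : ℝ} (hα : 1 < α) (hβ : 1 < β) (ht : 0 < t) :
    ∫⁻ x in Ioi 0, ∫⁻ y in Ioi 0,
        ‖|x - y| * besselI0 (2 * √(x * y)) * exp (-(α * x)) * exp (-(β * y))‖ₑ ≤
      ENNReal.ofReal (1 / (4 * t) / (1 - α⁻¹ * β⁻¹) + 4 * t / (1 - α⁻¹ * β⁻¹) ^ 2) := by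
  set c := 1 / (4 * t)
  set q := α⁻¹ * β⁻¹
  have ha : α⁻¹ < 1 := inv_lt_one_of_one_lt₀ hα
  have hb : β⁻¹ < 1 := inv_lt_one_of_one_lt₀ hβ
  have hα0 : 0 < α⁻¹ := by positivity
  have hβ0 : 0 < β⁻¹ := by positivity
  have hq0 : 0 ≤ q := by positivity
  have hq1 : q < 1 := mul_lt_one_of_nonneg_of_lt_one_left hα0.le ha hb.le
  have hδ : 0 < 1 - q := by linarith
  have hc : 0 ≤ c := by positivity
  have hbound := hasSum_majorantBound t c hq0 hq1
  calc _ ≤ ∫⁻ x in Ioi 0, ∫⁻ y in Ioi 0, ∑' k, ENNReal.ofReal (majorantTerm α β t c k x y) :=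
        setLIntegral_mono' measurableSet_Ioi fun x hx => setLIntegral_mono' measurableSet_Ioi
          fun y hy => enorm_le_tsum_majorantTerm ht (le_of_lt hx) (le_of_lt hy)
    _ = ∑' k, ∫⁻ x in Ioi 0, ∫⁻ y in Ioi 0, ENNReal.ofReal (majorantTerm α β t c k x y) := by
        have hmeas : ∀ k, Measurable fun p : ℝ × ℝ =>
            ENNReal.ofReal (majorantTerm α β t c k p.1 p.2) := fun k => by
          unfold majorantTerm; fun_prop
        rw [← lintegral_tsum fun k => (hmeas k).lintegral_prod_right'.aemeasurable]
        exact lintegral_congr fun x =>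
          lintegral_tsum fun k => ((hmeas k).comp measurable_prodMk_left).aemeasurable
    _ ≤ ∑' k : ℕ, ENNReal.ofReal ((c + 2 * t * (k + 1) + t * (1 - q) ^ 2 * ((k + 1) * (k + 2))) *
          q ^ k) := by
        refine ENNReal.tsum_le_tsum fun k => ?_
        rw [lintegral_lintegral_majorantTerm k (by linarith) (by linarith) ht.le hc]
        exact ENNReal.ofReal_le_ofReal
          (majorantCoeff_le hα0.le ha.le hβ0.le hb.le ht.le hc k)
    _ = ENNReal.ofReal (c / (1 - q) + 2 * t / (1 - q) ^ 2 + 2 * t / (1 - q)) := by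
        rw [← ENNReal.ofReal_tsum_of_nonneg (fun k => by positivity) hbound.summable,
          hbound.tsum_eq]
    _ ≤ _ := by
        refine ENNReal.ofReal_le_ofReal ?_
        have : 2 * t / (1 - q) ≤ 2 * t / (1 - q) ^ 2 :=
          div_le_div_of_nonneg_left (by positivity) (by positivity)
            (pow_le_of_le_one hδ.le (by linarith) two_ne_zero)
        linarith [show 4 * t / (1 - q) ^ 2 = 2 * t / (1 - q) ^ 2 + 2 * t / (1 - q) ^ 2 by ring]

lemma norm_integral_integral_le {X Y : Type*} [MeasurableSpace X] [MeasurableSpace Y]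
    {μ : Measure X} {ν : Measure Y} (F : X → Y → ℝ) {B : ℝ} (hB : 0 ≤ B)
    (h : ∫⁻ x, ∫⁻ y, ‖F x y‖ₑ ∂ν ∂μ ≤ ENNReal.ofReal B) :
    ‖∫ x, ∫ y, F x y ∂ν ∂μ‖ ≤ B := by
  have := ((enorm_integral_le_lintegral_enorm _).trans
    (lintegral_mono fun x => enorm_integral_le_lintegral_enorm (F x))).trans h
  rwa [← ofReal_norm, ENNReal.ofReal_le_ofReal_iff hB] at this

lemma norm_integral_integral_bessel_le {α β t : ℝ} (hα : 1 < α) (hβ : 1 < β) (ht : 0 < t) :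
    ‖∫ x in Ioi 0, ∫ y in Ioi 0,
        |x - y| * besselI0 (2 * √(x * y)) * exp (-(α * x)) * exp (-(β * y))‖ ≤
      1 / (4 * t) / (1 - α⁻¹ * β⁻¹) + 4 * t / (1 - α⁻¹ * β⁻¹) ^ 2 := by
  have hq : α⁻¹ * β⁻¹ < 1 :=
    mul_lt_one_of_nonneg_of_lt_one_left (by positivity) (inv_lt_one_of_one_lt₀ hα)
      (inv_le_one_of_one_le₀ hβ.le)
  have hδ : 0 < 1 - α⁻¹ * β⁻¹ := by linarith
  exact norm_integral_integral_le _ (by positivity) (lintegral_lintegral_enorm_le hα hβ ht)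

lemma mul_div_add_div_sq_le {p δ κ r : ℝ} (hκ : 0 < κ) (hr : 0 < r) (hp : p ≤ r ^ 4 / 4)
    (hδ : κ * r ^ 2 ≤ δ) :
    p * (1 / (4 * r) / δ + 4 * r / δ ^ 2) ≤ (1 / (16 * κ) + 1 / κ ^ 2) * r := by
  have hδ0 : 0 < δ := lt_of_lt_of_le (by positivity) hδ
  have h1 : p * (1 / (4 * r) / δ) ≤ r ^ 4 / 4 * (1 / (4 * r) / (κ * r ^ 2)) := by gcongr
  have h2 : p * (4 * r / δ ^ 2) ≤ r ^ 4 / 4 * (4 * r / (κ * r ^ 2) ^ 2) := by gcongr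
  have e1 : r ^ 4 / 4 * (1 / (4 * r) / (κ * r ^ 2)) = r / (16 * κ) := by field_simp; ring
  have e2 : r ^ 4 / 4 * (4 * r / (κ * r ^ 2) ^ 2) = r / κ ^ 2 := by field_simp
  rw [e1] at h1
  rw [e2] at h2
  linarith [show (1 / (16 * κ) + 1 / κ ^ 2) * r = r / (16 * κ) + r / κ ^ 2 by ring]

lemma mul_le_one_sub_inv_mul_inv {ω l m : ℝ} (hω : 0 < ω) (hl : 0 ≤ l) (hl1 : l ≤ 1)
    (hm : 0 ≤ m) (hm1 : m ≤ 1) :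
    ω / (1 + ω) ^ 2 * (l + m) ≤ 1 - (1 + ω * l)⁻¹ * (1 + ω * m)⁻¹ := by
  have hP : 0 < (1 + ω * l) * (1 + ω * m) := by positivity
  rw [← mul_inv, ← one_div, one_sub_div hP.ne', div_mul_eq_mul_div,
    div_le_div_iff₀ (by positivity) hP]
  have hωl : ω * l ≤ ω := by nlinarith
  have hωm : ω * m ≤ ω := by nlinarith
  nlinarith [mul_le_mul hωl hωm (by positivity) hω.le, mul_nonneg hω.le (add_nonneg hl hm),
    mul_nonneg (mul_nonneg hω.le hl) (mul_nonneg hω.le hm)]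

lemma mul_norm_integral_integral_bessel_le {ω l m : ℝ} (hω : 0 < ω) (hl : 0 < l) (hl1 : l ≤ 1)
    (hm : 0 < m) (hm1 : m ≤ 1) :
    l * m * ‖∫ x in Ioi 0, ∫ y in Ioi 0, |x - y| * besselI0 (2 * √(x * y)) *
        exp (-((1 + ω * l) * x)) * exp (-((1 + ω * m) * y))‖ ≤
      (1 / (16 * (ω / (1 + ω) ^ 2)) + 1 / (ω / (1 + ω) ^ 2) ^ 2) * √(l + m) := by
  have hs : 0 < l + m := add_pos hl hm
  calc l * m * ‖_‖
      ≤ l * m * (1 / (4 * √(l + m)) / (1 - (1 + ω * l)⁻¹ * (1 + ω * m)⁻¹) +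
          4 * √(l + m) / (1 - (1 + ω * l)⁻¹ * (1 + ω * m)⁻¹) ^ 2) :=
        mul_le_mul_of_nonneg_left (norm_integral_integral_bessel_le
          (lt_add_of_pos_right 1 (mul_pos hω hl)) (lt_add_of_pos_right 1 (mul_pos hω hm))
          (sqrt_pos.2 hs)) (mul_pos hl hm).le
    _ ≤ _ := by
        refine mul_div_add_div_sq_le (by positivity) (sqrt_pos.2 hs) ?_ ?_
        · rw [show √(l + m) ^ 4 = (l + m) ^ 2 by
            rw [show 4 = 2 * 2 from rfl, pow_mul, sq_sqrt hs.le]]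
          nlinarith [sq_nonneg (l - m)]
        · rw [sq_sqrt hs.le]
          exact mul_le_one_sub_inv_mul_inv hω hl.le hl1 hm.le hm1

theorem stmt_14 (ω : ℝ) (hω : 0 < ω) :
    Filter.Tendsto
      (fun p : ℝ × ℝ => p.1 * p.2 * ∫ x in Set.Ioi (0:ℝ), ∫ y in Set.Ioi (0:ℝ),
        |x - y| * besselI0 (2 * Real.sqrt (x * y)) * Real.exp (-x - y) *
          Real.exp (-ω * (p.1 * x + p.2 * y)))
      (nhdsWithin ((0:ℝ), (0:ℝ)) (Set.Ioi 0 ×ˢ Set.Ioi 0)) (nhds 0) := by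
  have hexp : ∀ l m x y : ℝ, exp (-x - y) * exp (-ω * (l * x + m * y)) =
      exp (-((1 + ω * l) * x)) * exp (-((1 + ω * m) * y)) := fun l m x y => by
    rw [← exp_add, ← exp_add]; ring_nf
  simp_rw [mul_assoc _ (exp (-_ - _)), hexp, ← mul_assoc]
  set C := 1 / (16 * (ω / (1 + ω) ^ 2)) + 1 / (ω / (1 + ω) ^ 2) ^ 2
  refine squeeze_zero_norm' (a := fun p : ℝ × ℝ => C * √(p.1 + p.2)) ?_
    (((continuous_const.mul (continuous_fst.add continuous_snd).sqrt).tendsto' _ _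
      (by simp)).mono_left nhdsWithin_le_nhds)
  filter_upwards [self_mem_nhdsWithin, mem_nhdsWithin_of_mem_nhds
    (prod_mem_nhds (Iic_mem_nhds one_pos) (Iic_mem_nhds one_pos))] with p ⟨hl, hm⟩ ⟨hl1, hm1⟩
  rw [norm_mul, norm_of_nonneg (mul_pos hl hm).le]
  exact mul_norm_integral_integral_bessel_le hω hl hl1 hm hm1
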